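/- arXiv:1602.03851 — 2 statements merged into one kernel-verified Lean document; each statement's English description precedes it below -/
import Mathlib

section
/- Let H be a separable Hilbert space, T > 0, and let 0 ≤ T' and ε > 0 satisfy T' + ε ≤ T. For every y ∈ L²([0,T];H) (Bochner square-integrable), the function T^ε(y) satisfies the bound ∫₀^T ‖T^ε(y)(s)‖²_H ds ≤ ∫₀^{T'} ‖y(t+ε) − y(t)‖²_H dt, and consequently ∫₀^T ‖T^ε(y)(s)‖²_H ds ≤ 4‖y‖²_{L²([0,T];H)}, a bound uniform in ε. -/
open MeasureTheory
open scoped ENNReal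

set_option maxHeartbeats 1000000

lemma sq_integral_norm_le {α : Type*} [MeasurableSpace α] {μ : Measure α} [IsFiniteMeasure μ]
    {E : Type*} [NormedAddCommGroup E] {g : α → E} (hg : MemLp g 2 μ) :
    (∫ x, ‖g x‖ ∂μ) ^ 2 ≤ (μ Set.univ).toReal * ∫ x, ‖g x‖ ^ 2 ∂μ := by
  have hg1 : Integrable g μ := hg.integrable one_le_two
  have hgn : Integrable (fun x => ‖g x‖) μ := hg1.norm
  have hg2 : Integrable (fun x => ‖g x‖ ^ 2) μ := hg.norm.integrable_sq
  set F : α → ℝ≥0∞ := fun x => ENNReal.ofReal ‖g x‖ with hF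
  have hFm : AEMeasurable F μ := (hg1.1.norm.aemeasurable).ennreal_ofReal
  have h1 : ENNReal.ofReal (∫ x, ‖g x‖ ∂μ) = ∫⁻ x, F x ∂μ :=
    ofReal_integral_eq_lintegral_ofReal hgn (Filter.Eventually.of_forall fun x => norm_nonneg _)
  have h2 : ENNReal.ofReal (∫ x, ‖g x‖ ^ 2 ∂μ) = ∫⁻ x, F x ^ (2 : ℝ) ∂μ := by
    rw [ofReal_integral_eq_lintegral_ofReal hg2
      (Filter.Eventually.of_forall fun x => sq_nonneg _)]
    refine lintegral_congr fun x => ?_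
    rw [← Real.rpow_natCast ‖g x‖ 2, ENNReal.ofReal_rpow_of_nonneg (norm_nonneg _) (by norm_num)]
    norm_num [hF]
  have hconj : Real.HolderConjugate 2 2 := Real.HolderConjugate.two_two
  have holder := ENNReal.lintegral_mul_le_Lp_mul_Lq μ hconj hFm aemeasurable_const (g := fun _ => 1)
  simp only [mul_one, ENNReal.one_rpow, lintegral_const, one_mul] at holder
  have holder' : (∫⁻ a, F a ∂μ) ≤ (∫⁻ a, F a ^ (2:ℝ) ∂μ) ^ (1/2:ℝ) * μ Set.univ ^ (1/2:ℝ) := by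
    simpa using holder
  have hsq : (∫⁻ a, F a ∂μ) ^ (2:ℝ) ≤ (∫⁻ a, F a ^ (2:ℝ) ∂μ) * μ Set.univ := by
    calc (∫⁻ a, F a ∂μ) ^ (2:ℝ)
        ≤ ((∫⁻ a, F a ^ (2:ℝ) ∂μ) ^ (1/2:ℝ) * μ Set.univ ^ (1/2:ℝ)) ^ (2:ℝ) :=
          ENNReal.rpow_le_rpow holder' (by norm_num)
      _ = (∫⁻ a, F a ^ (2:ℝ) ∂μ) * μ Set.univ := by
          rw [ENNReal.mul_rpow_of_nonneg _ _ (by norm_num), ← ENNReal.rpow_mul,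
            ← ENNReal.rpow_mul]
          norm_num
  have hsq' : (∫⁻ a, F a ∂μ) ^ (2:ℕ) ≤ (∫⁻ a, F a ^ (2:ℕ) ∂μ) * μ Set.univ := by
    have e1 : ∀ x : ℝ≥0∞, x ^ (2:ℝ) = x ^ (2:ℕ) := fun x => by
      rw [show ((2:ℝ)) = ((2:ℕ):ℝ) by norm_num, ENNReal.rpow_natCast]
    simpa only [e1] using hsq
  have h2' : ENNReal.ofReal (∫ x, ‖g x‖ ^ 2 ∂μ) = ∫⁻ x, F x ^ (2:ℕ) ∂μ := by
    rw [h2]; exact lintegral_congr fun x => by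
      rw [show ((2:ℝ)) = ((2:ℕ):ℝ) by norm_num, ENNReal.rpow_natCast]
  have hL : ENNReal.ofReal ((∫ x, ‖g x‖ ∂μ) ^ 2) = (∫⁻ a, F a ∂μ) ^ (2:ℕ) := by
    rw [ENNReal.ofReal_pow (integral_nonneg fun x => norm_nonneg _), h1]
  have hfin : (∫⁻ a, F a ^ (2:ℕ) ∂μ) * μ Set.univ ≠ ⊤ :=
    ENNReal.mul_ne_top (h2' ▸ ENNReal.ofReal_ne_top) (measure_ne_top μ _)
  have hmono := ENNReal.toReal_mono hfin (hL ▸ hsq')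
  rw [ENNReal.toReal_ofReal (sq_nonneg _), ENNReal.toReal_mul, ← h2',
    ENNReal.toReal_ofReal (integral_nonneg fun x => sq_nonneg _)] at hmono
  linarith [hmono]



open MeasureTheory

/-- The averaged-difference operator
`T^ε(y)(s) = (1/ε) ∫_{max(s−ε,0)}^{min(s,T')} (y(t+ε) − y(t)) dt`
(equivalently `(1/ε) ∫₀^{T'} (y(t+ε) − y(t)) 1_{A^ε}(t,s) dt` where
`A^ε = {(t,s) : 0 ≤ t ≤ T', t ≤ s ≤ t + ε}`). -/
noncomputable def Teps {H : Type*} [NormedAddCommGroup H] [NormedSpace ℝ H]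
    (T' ε : ℝ) (y : ℝ → H) (s : ℝ) : H :=
  (1 / ε) • ∫ t in Set.Ioc (max (s - ε) 0) (min s T'), (y (t + ε) - y t)

/-- Let `H` be a separable Hilbert space, `T > 0`,
`0 ≤ T'`, `ε > 0` with `T' + ε ≤ T`. For every `y ∈ L²([0,T];H)` one has
`∫₀^T ‖T^ε(y)(s)‖² ds ≤ ∫₀^{T'} ‖y(t+ε) − y(t)‖² dt`, and consequently
`∫₀^T ‖T^ε(y)(s)‖² ds ≤ 4 ‖y‖²_{L²([0,T];H)}`, uniformly in `ε`. -/
theorem Teps_L2_bound {H : Type*} [NormedAddCommGroup H] [InnerProductSpace ℝ H]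
    [CompleteSpace H] [TopologicalSpace.SeparableSpace H]
    (T T' ε : ℝ) (hT : 0 < T) (hT' : 0 ≤ T') (hε : 0 < ε) (hTT : T' + ε ≤ T)
    (y : ℝ → H) (hy : MemLp y 2 (volume.restrict (Set.Icc 0 T))) :
    (∫ s in Set.Icc (0 : ℝ) T, ‖Teps T' ε y s‖ ^ 2) ≤
      (∫ t in Set.Icc (0 : ℝ) T', ‖y (t + ε) - y t‖ ^ 2) ∧
    (∫ s in Set.Icc (0 : ℝ) T, ‖Teps T' ε y s‖ ^ 2) ≤
      4 * ∫ t in Set.Icc (0 : ℝ) T, ‖y t‖ ^ 2 := by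
  classical
  set μT := volume.restrict (Set.Icc (0:ℝ) T) with hμT
  set μT' := volume.restrict (Set.Icc (0:ℝ) T') with hμT'
  haveI : IsFiniteMeasure μT := ⟨by
    rw [Measure.restrict_apply_univ, Real.volume_Icc]; exact ENNReal.ofReal_lt_top⟩
  haveI : IsFiniteMeasure μT' := ⟨by
    rw [Measure.restrict_apply_univ, Real.volume_Icc]; exact ENNReal.ofReal_lt_top⟩
  have hsub1 : Set.Icc (0:ℝ) T' ⊆ Set.Icc 0 T := Set.Icc_subset_Icc le_rfl (by linarith)
  have hsub2 : Set.Icc ε (T'+ε) ⊆ Set.Icc 0 T := Set.Icc_subset_Icc (by linarith) (by linarith)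
  have hy1 : MemLp y 2 μT' := hy.mono_measure (Measure.restrict_mono hsub1 le_rfl)
  have hyε : MemLp y 2 (volume.restrict (Set.Icc ε (T'+ε))) :=
    hy.mono_measure (Measure.restrict_mono hsub2 le_rfl)
  have hmp : MeasurePreserving (fun t : ℝ => t + ε) μT' (volume.restrict (Set.Icc ε (T'+ε))) := by
    refine ⟨measurable_add_const ε, ?_⟩
    have hpre : (fun t : ℝ => t + ε) ⁻¹' Set.Icc ε (T'+ε) = Set.Icc 0 T' := by
      rw [Set.preimage_add_const_Icc]; norm_num
    rw [hμT', ← hpre, ← Measure.restrict_map (measurable_add_const ε) measurableSet_Icc,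
      (measurePreserving_add_right volume ε).map_eq]
  have hyshift : MemLp (fun t => y (t + ε)) 2 μT' := hyε.comp_measurePreserving hmp
  have hg2 : MemLp (fun t => y (t + ε) - y t) 2 μT' := hyshift.sub hy1
  have hf_int : Integrable (fun t => ‖y (t + ε) - y t‖ ^ 2) μT' :=
    (memLp_two_iff_integrable_sq_norm hg2.1).1 hg2
  -- pointwise Cauchy-Schwarz bound
  have hD : ∀ s : ℝ, ‖Teps T' ε y s‖ ^ 2 ≤
      (1/ε) * ∫ t in Set.Ioc (max (s - ε) 0) (min s T'), ‖y (t + ε) - y t‖ ^ 2 := by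
    intro s
    set I := Set.Ioc (max (s - ε) 0) (min s T') with hI
    have hIsub : I ⊆ Set.Icc 0 T' := fun t ht =>
      ⟨le_of_lt (lt_of_le_of_lt (le_max_right _ _) ht.1), le_trans ht.2 (min_le_right _ _)⟩
    have hgI : MemLp (fun t => y (t + ε) - y t) 2 (volume.restrict I) :=
      hg2.mono_measure (Measure.restrict_mono hIsub le_rfl)
    have hvolI : volume I ≤ ENNReal.ofReal ε := by
      rw [hI, Real.volume_Ioc]
      apply ENNReal.ofReal_le_ofReal
      have h1 : min s T' ≤ s := min_le_left _ _
      have h2 : s - ε ≤ max (s - ε) 0 := le_max_left _ _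
      linarith
    haveI : IsFiniteMeasure (volume.restrict I) := ⟨by
      rw [Measure.restrict_apply_univ]
      exact lt_of_le_of_lt hvolI ENNReal.ofReal_lt_top⟩
    have hCS := sq_integral_norm_le hgI
    rw [Measure.restrict_apply_univ] at hCS
    have hvol' : (volume I).toReal ≤ ε := by
      have := ENNReal.toReal_mono ENNReal.ofReal_ne_top hvolI
      rwa [ENNReal.toReal_ofReal hε.le] at this
    have hnn : (0:ℝ) ≤ ∫ t in I, ‖y (t + ε) - y t‖ ^ 2 :=
      integral_nonneg fun t => sq_nonneg _
    have hnorm : ‖Teps T' ε y s‖ ≤ (1/ε) * ∫ t in I, ‖y (t + ε) - y t‖ := by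
      rw [Teps, norm_smul, Real.norm_eq_abs, abs_of_pos (by positivity)]
      exact mul_le_mul_of_nonneg_left (norm_integral_le_integral_norm _) (by positivity)
    calc ‖Teps T' ε y s‖ ^ 2 ≤ ((1/ε) * ∫ t in I, ‖y (t + ε) - y t‖) ^ 2 :=
          pow_le_pow_left₀ (norm_nonneg _) hnorm 2
      _ = (1/ε)^2 * (∫ t in I, ‖y (t + ε) - y t‖) ^ 2 := by ring
      _ ≤ (1/ε)^2 * ((volume I).toReal * ∫ t in I, ‖y (t + ε) - y t‖ ^ 2) :=
          mul_le_mul_of_nonneg_left hCS (by positivity)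
      _ ≤ (1/ε) * ∫ t in I, ‖y (t + ε) - y t‖ ^ 2 := by
          have h1 : (1/ε)^2 * ((volume I).toReal * (∫ t in I, ‖y (t + ε) - y t‖ ^ 2))
              ≤ (1/ε)^2 * (ε * ∫ t in I, ‖y (t + ε) - y t‖ ^ 2) :=
            mul_le_mul_of_nonneg_left (mul_le_mul_of_nonneg_right hvol' hnn) (by positivity)
          have h2 : (1/ε)^2 * (ε * ∫ t in I, ‖y (t + ε) - y t‖ ^ 2)
              = (1/ε) * ∫ t in I, ‖y (t + ε) - y t‖ ^ 2 := by
            field_simp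
          linarith
  -- the kernel G
  set f : ℝ → ℝ := fun t => ‖y (t + ε) - y t‖ ^ 2 with hf
  set G : ℝ → ℝ → ℝ := fun s t => (Set.Ioc (max (s - ε) 0) (min s T')).indicator f t with hG
  have hIsub' : ∀ s : ℝ, Set.Ioc (max (s - ε) 0) (min s T') ⊆ Set.Icc 0 T' := fun s t ht =>
    ⟨le_of_lt (lt_of_le_of_lt (le_max_right _ _) ht.1), le_trans ht.2 (min_le_right _ _)⟩
  have hGeq : ∀ s : ℝ, (∫ t in Set.Ioc (max (s - ε) 0) (min s T'), f t) = ∫ t, G s t ∂μT' := by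
    intro s
    calc (∫ t in Set.Ioc (max (s - ε) 0) (min s T'), f t)
        = ∫ t, G s t ∂volume := (integral_indicator measurableSet_Ioc).symm
      _ = ∫ t, G s t ∂μT' := by
          rw [hμT', ← integral_indicator measurableSet_Icc,
            Set.indicator_eq_self.2 (subset_trans Set.support_indicator_subset (hIsub' s))]
  have hA : MeasurableSet {p : ℝ × ℝ | max (p.1 - ε) 0 < p.2 ∧ p.2 ≤ min p.1 T'} := by
    rw [Set.setOf_and]
    exact (measurableSet_lt ((measurable_fst.sub measurable_const).max measurable_const)
      measurable_snd).inter
      (measurableSet_le measurable_snd (measurable_fst.min measurable_const))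
  have hGuncurry : Function.uncurry G =
      Set.indicator {p : ℝ × ℝ | max (p.1 - ε) 0 < p.2 ∧ p.2 ≤ min p.1 T'}
        (fun p => f p.2) := by
    funext p
    simp only [Function.uncurry, hG, Set.indicator_apply, Set.mem_Ioc, Set.mem_setOf_eq]
  have hfa : AEStronglyMeasurable f μT' := hf_int.1
  have hGa : AEStronglyMeasurable (Function.uncurry G) (μT.prod μT') := by
    rw [hGuncurry]
    exact (hfa.comp_snd).indicator hA
  have hdom : Integrable (fun p : ℝ × ℝ => ‖f p.2‖) (μT.prod μT') := by
    have h1 : Integrable (fun _ : ℝ => (1:ℝ)) μT := integrable_const 1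
    simpa using h1.mul_prod hf_int.norm
  have hGint : Integrable (Function.uncurry G) (μT.prod μT') := by
    refine Integrable.mono' hdom hGa (Filter.Eventually.of_forall fun p => ?_)
    rw [hGuncurry]
    exact norm_indicator_le_norm_self _ _
  have hstep4 : ∀ t : ℝ, (∫ s, G s t ∂μT) ≤ ε * f t := by
    intro t
    have hSm : MeasurableSet {s : ℝ | max (s - ε) 0 < t ∧ t ≤ min s T'} := by
      rw [Set.setOf_and]
      exact (measurableSet_lt ((measurable_id.sub measurable_const).max measurable_const)
        measurable_const).inter
        (measurableSet_le measurable_const (measurable_id.min measurable_const))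
    have heq : (fun s => G s t) =
        Set.indicator {s : ℝ | max (s - ε) 0 < t ∧ t ≤ min s T'} (fun _ => f t) := by
      funext s
      simp only [hG, Set.indicator_apply, Set.mem_Ioc, Set.mem_setOf_eq]
    rw [heq, integral_indicator_const _ hSm, smul_eq_mul]
    have hSsub : {s : ℝ | max (s - ε) 0 < t ∧ t ≤ min s T'} ⊆ Set.Ico t (t + ε) := by
      intro s hs
      have h1 : min s T' ≤ s := min_le_left _ _
      have h2 : s - ε ≤ max (s - ε) 0 := le_max_left _ _
      exact ⟨le_trans hs.2 h1, by linarith [hs.1]⟩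
    have hμS : μT {s : ℝ | max (s - ε) 0 < t ∧ t ≤ min s T'} ≤ ENNReal.ofReal ε := by
      calc μT {s : ℝ | max (s - ε) 0 < t ∧ t ≤ min s T'}
          = volume ({s : ℝ | max (s - ε) 0 < t ∧ t ≤ min s T'} ∩ Set.Icc 0 T) :=
            Measure.restrict_apply hSm
        _ ≤ volume (Set.Ico t (t + ε)) :=
            measure_mono (subset_trans Set.inter_subset_left hSsub)
        _ = ENNReal.ofReal ε := by rw [Real.volume_Ico]; norm_num
    have htoReal : (μT {s : ℝ | max (s - ε) 0 < t ∧ t ≤ min s T'}).toReal ≤ ε :=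
      ENNReal.toReal_le_of_le_ofReal hε.le hμS
    exact mul_le_mul_of_nonneg_right htoReal (sq_nonneg _)
  have hpart1 : (∫ s in Set.Icc (0:ℝ) T, ‖Teps T' ε y s‖ ^ 2) ≤
      ∫ t in Set.Icc (0:ℝ) T', ‖y (t + ε) - y t‖ ^ 2 := by
    have hint_inner : Integrable (fun s => ∫ t, G s t ∂μT') μT := by
      have h := hGint.integral_prod_left
      simpa [Function.uncurry] using h
    have hint_inner2 : Integrable (fun t => ∫ s, G s t ∂μT) μT' := by
      have h := hGint.integral_prod_right
      simpa [Function.uncurry] using h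
    calc (∫ s in Set.Icc (0:ℝ) T, ‖Teps T' ε y s‖ ^ 2)
        ≤ ∫ s, (1/ε) * ∫ t, G s t ∂μT' ∂μT := by
          refine integral_mono_of_nonneg (Filter.Eventually.of_forall fun s => sq_nonneg _)
            (hint_inner.const_mul (1/ε)) (Filter.Eventually.of_forall fun s => ?_)
          show ‖Teps T' ε y s‖ ^ 2 ≤ 1 / ε * ∫ t, G s t ∂μT'
          rw [← hGeq s]; exact hD s
      _ = (1/ε) * ∫ s, (∫ t, G s t ∂μT') ∂μT := integral_const_mul _ _
      _ = (1/ε) * ∫ t, (∫ s, G s t ∂μT) ∂μT' := by rw [integral_integral_swap hGint]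
      _ ≤ (1/ε) * ∫ t, ε * f t ∂μT' := by
          refine mul_le_mul_of_nonneg_left ?_ (by positivity)
          exact integral_mono hint_inner2 (hf_int.const_mul ε) hstep4
      _ = ∫ t, f t ∂μT' := by
          rw [integral_const_mul, ← mul_assoc]
          rw [one_div, inv_mul_cancel₀ (ne_of_gt hε), one_mul]
  -- part 2
  have hyshift_int : Integrable (fun t => ‖y (t + ε)‖ ^ 2) μT' :=
    (memLp_two_iff_integrable_sq_norm hyshift.1).1 hyshift
  have hy1_int : Integrable (fun t => ‖y t‖ ^ 2) μT' :=
    (memLp_two_iff_integrable_sq_norm hy1.1).1 hy1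
  have hyT_int : Integrable (fun t => ‖y t‖ ^ 2) μT :=
    (memLp_two_iff_integrable_sq_norm hy.1).1 hy
  have hshift_eq : (∫ t in Set.Icc (0:ℝ) T', ‖y (t + ε)‖ ^ 2)
      = ∫ u in Set.Icc ε (T'+ε), ‖y u‖ ^ 2 :=
    hmp.integral_comp (MeasurableEquiv.addRight ε).measurableEmbedding (fun u => ‖y u‖ ^ 2)
  have h2a : (∫ t in Set.Icc (0:ℝ) T', ‖y (t + ε)‖ ^ 2) ≤ ∫ t in Set.Icc (0:ℝ) T, ‖y t‖ ^ 2 := by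
    rw [hshift_eq]
    exact setIntegral_mono_set hyT_int
      (Filter.Eventually.of_forall fun t => sq_nonneg _) (HasSubset.Subset.eventuallyLE hsub2)
  have h2b : (∫ t in Set.Icc (0:ℝ) T', ‖y t‖ ^ 2) ≤ ∫ t in Set.Icc (0:ℝ) T, ‖y t‖ ^ 2 :=
    setIntegral_mono_set hyT_int
      (Filter.Eventually.of_forall fun t => sq_nonneg _) (HasSubset.Subset.eventuallyLE hsub1)
  have hpart2 : (∫ t in Set.Icc (0:ℝ) T', ‖y (t + ε) - y t‖ ^ 2) ≤
      4 * ∫ t in Set.Icc (0:ℝ) T, ‖y t‖ ^ 2 := by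
    have hpt : ∀ t : ℝ, ‖y (t + ε) - y t‖ ^ 2 ≤ 2 * ‖y (t + ε)‖ ^ 2 + 2 * ‖y t‖ ^ 2 := by
      intro t
      have h := norm_sub_le (y (t + ε)) (y t)
      have hsq := mul_self_le_mul_self (norm_nonneg (y (t + ε) - y t)) h
      nlinarith [sq_nonneg (‖y (t + ε)‖ - ‖y t‖), hsq]
    calc (∫ t in Set.Icc (0:ℝ) T', ‖y (t + ε) - y t‖ ^ 2)
        ≤ ∫ t, (2 * ‖y (t + ε)‖ ^ 2 + 2 * ‖y t‖ ^ 2) ∂μT' :=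
          by
            have hpt' : f ≤ fun t => 2 * ‖y (t + ε)‖ ^ 2 + 2 * ‖y t‖ ^ 2 := hpt
            exact integral_mono hf_int
              ((hyshift_int.const_mul 2).add (hy1_int.const_mul 2)) hpt'
      _ = 2 * (∫ t, ‖y (t + ε)‖ ^ 2 ∂μT') + 2 * (∫ t, ‖y t‖ ^ 2 ∂μT') := by
          rw [integral_add (hyshift_int.const_mul 2) (hy1_int.const_mul 2),
            integral_const_mul, integral_const_mul]
      _ ≤ 4 * ∫ t in Set.Icc (0:ℝ) T, ‖y t‖ ^ 2 := by linarith
  exact ⟨hpart1, le_trans hpart1 hpart2⟩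
end

section
/- Let H be a separable Hilbert space, T > 0 and 0 ≤ T' < T. For every fixed y ∈ L²([0,T];H) (Bochner square-integrable), the functions T^ε(y) converge to 0 in L²([0,T];H) as ε ↓ 0, i.e. ∫₀^T ‖T^ε(y)(s)‖²_H ds → 0 as ε ↓ 0 (with ε small enough that T' + ε ≤ T). -/
open MeasureTheory

open scoped ENNReal

/-- Cauchy–Schwarz for lintegrals. -/
lemma cs_aux {α : Type*} [MeasurableSpace α] (μ : Measure α) (g : α → ℝ≥0∞)
    (hg : AEMeasurable g μ) :
    (∫⁻ x, g x ∂μ) ^ 2 ≤ μ Set.univ * ∫⁻ x, (g x) ^ 2 ∂μ := by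
  have hpq : Real.HolderConjugate 2 2 := ⟨by norm_num, by norm_num, by norm_num⟩
  have h := ENNReal.lintegral_mul_le_Lp_mul_Lq μ hpq hg aemeasurable_const
    (g := fun _ => (1 : ℝ≥0∞))
  simp only [Pi.mul_apply, mul_one, ENNReal.one_rpow, lintegral_one, one_div] at h
  calc (∫⁻ x, g x ∂μ) ^ 2
      ≤ ((∫⁻ x, g x ^ (2:ℝ) ∂μ) ^ (2:ℝ)⁻¹ * (μ Set.univ) ^ (2:ℝ)⁻¹) ^ 2 :=
        pow_le_pow_left' h 2
    _ = (∫⁻ x, g x ^ (2:ℝ) ∂μ) * μ Set.univ := by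
        rw [mul_pow, ← ENNReal.rpow_natCast ((∫⁻ x, g x ^ (2:ℝ) ∂μ) ^ (2:ℝ)⁻¹) 2,
          ← ENNReal.rpow_natCast ((μ Set.univ) ^ (2:ℝ)⁻¹) 2,
          ← ENNReal.rpow_mul, ← ENNReal.rpow_mul]
        norm_num
    _ = μ Set.univ * ∫⁻ x, g x ^ 2 ∂μ := by
        rw [mul_comm]
        congr 1
        refine lintegral_congr fun x => ?_
        rw [← ENNReal.rpow_natCast (g x) 2]
        norm_num

/-- Key estimate. -/
lemma key {H : Type*} [NormedAddCommGroup H] [NormedSpace ℝ H] [CompleteSpace H]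
    (T T' ε : ℝ) (hε : 0 < ε) (f0 : ℝ → H) (hf0 : StronglyMeasurable f0) :
    ∫⁻ s in Set.Icc (0:ℝ) T, (‖Teps T' ε f0 s‖₊ : ℝ≥0∞) ^ 2
      ≤ ∫⁻ t, (‖f0 (t + ε) - f0 t‖₊ : ℝ≥0∞) ^ 2 := by
  set G : ℝ → ℝ≥0∞ := fun t => (‖f0 (t + ε) - f0 t‖₊ : ℝ≥0∞) ^ 2 with hGdef
  have hFm : StronglyMeasurable fun t => f0 (t + ε) - f0 t :=
    (hf0.comp_measurable (measurable_id.add_const ε)).sub hf0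
  have hnm : Measurable fun t => (‖f0 (t + ε) - f0 t‖₊ : ℝ≥0∞) := hFm.enorm
  have hG : Measurable G := hnm.pow_const 2
  -- pointwise bound
  have hpt : ∀ s : ℝ, (‖Teps T' ε f0 s‖₊ : ℝ≥0∞) ^ 2
      ≤ ENNReal.ofReal (1/ε) * ∫⁻ t in Set.Ioc (max (s - ε) 0) (min s T'), G t := by
    intro s
    set a := max (s - ε) 0 with ha
    set b := min s T' with hb
    have hIvol : volume (Set.Ioc a b) ≤ ENNReal.ofReal ε := by
      rw [Real.volume_Ioc]
      apply ENNReal.ofReal_le_ofReal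
      have h1 : b ≤ s := min_le_left _ _
      have h2 : s - ε ≤ a := le_max_left _ _
      linarith
    have hn : (‖Teps T' ε f0 s‖₊ : ℝ≥0∞)
        ≤ ENNReal.ofReal (1/ε) * ∫⁻ t in Set.Ioc a b, (‖f0 (t + ε) - f0 t‖₊ : ℝ≥0∞) := by
      simp only [Teps]
      rw [nnnorm_smul, ENNReal.coe_mul, ← enorm_eq_nnnorm (1/ε), Real.enorm_eq_ofReal (by positivity : (0:ℝ) ≤ 1/ε)]
      exact mul_le_mul_right (enorm_integral_le_lintegral_enorm _) _
    calc (‖Teps T' ε f0 s‖₊ : ℝ≥0∞) ^ 2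
        ≤ (ENNReal.ofReal (1/ε) * ∫⁻ t in Set.Ioc a b, (‖f0 (t + ε) - f0 t‖₊ : ℝ≥0∞)) ^ 2 :=
          pow_le_pow_left' hn 2
      _ = ENNReal.ofReal (1/ε) ^ 2
            * (∫⁻ t in Set.Ioc a b, (‖f0 (t + ε) - f0 t‖₊ : ℝ≥0∞)) ^ 2 := mul_pow _ _ 2
      _ ≤ ENNReal.ofReal (1/ε) ^ 2
            * (volume (Set.Ioc a b) * ∫⁻ t in Set.Ioc a b, G t) := by
          refine mul_le_mul_right ?_ _
          have := cs_aux (volume.restrict (Set.Ioc a b))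
            (fun t => (‖f0 (t + ε) - f0 t‖₊ : ℝ≥0∞)) hnm.aemeasurable
          rwa [Measure.restrict_apply_univ] at this
      _ ≤ ENNReal.ofReal (1/ε) ^ 2
            * (ENNReal.ofReal ε * ∫⁻ t in Set.Ioc a b, G t) := by
          exact mul_le_mul_right (mul_le_mul_left hIvol _) _
      _ = ENNReal.ofReal (1/ε) * ∫⁻ t in Set.Ioc a b, G t := by
          rw [sq, mul_assoc, ← mul_assoc (ENNReal.ofReal (1/ε)) (ENNReal.ofReal ε),
            ← ENNReal.ofReal_mul (by positivity), one_div, inv_mul_cancel₀ hε.ne',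
            ENNReal.ofReal_one, one_mul]
  -- the kernel
  set K : ℝ → ℝ → ℝ≥0∞ :=
    fun s t => Set.indicator (Set.Ioc (max (s - ε) 0) (min s T')) G t with hKdef
  have hKm : Measurable (Function.uncurry K) := by
    have hset : MeasurableSet {p : ℝ × ℝ | p.2 ∈ Set.Ioc (max (p.1 - ε) 0) (min p.1 T')} := by
      simp only [Set.mem_Ioc, Set.setOf_and]
      exact (measurableSet_lt (by measurability) measurable_snd).inter
        (measurableSet_le measurable_snd (by measurability))
    have : Function.uncurry K = fun p : ℝ × ℝ =>
        if p.2 ∈ Set.Ioc (max (p.1 - ε) 0) (min p.1 T') then G p.2 else 0 := by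
      ext p
      simp [Function.uncurry, K, Set.indicator_apply]
    rw [this]
    exact Measurable.ite hset (hG.comp measurable_snd) measurable_const
  have hinner : ∀ t : ℝ, (∫⁻ s, K s t)
      = Set.indicator (Set.Ioc 0 T') (fun t => G t * ENNReal.ofReal ε) t := by
    intro t
    by_cases ht : t ∈ Set.Ioc 0 T'
    · obtain ⟨ht0, htT'⟩ := Set.mem_Ioc.mp ht
      have hKt : ∀ s, K s t = Set.indicator (Set.Ico t (t + ε)) (fun _ => G t) s := by
        intro s
        simp only [K, Set.indicator_apply, Set.mem_Ioc, Set.mem_Ico]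
        refine if_congr ?_ rfl rfl
        constructor
        · rintro ⟨h1, h2⟩
          exact ⟨(le_min_iff.mp h2).1, by have := (max_lt_iff.mp h1).1; linarith⟩
        · rintro ⟨h1, h2⟩
          exact ⟨max_lt_iff.mpr ⟨by linarith, ht0⟩, le_min_iff.mpr ⟨h1, htT'⟩⟩
      simp_rw [hKt]
      rw [lintegral_indicator measurableSet_Ico, setLIntegral_const, Real.volume_Ico,
        Set.indicator_of_mem ht, add_sub_cancel_left]
    · have hKt : ∀ s, K s t = 0 := by
        intro s
        refine Set.indicator_of_notMem ?_ _
        simp only [Set.mem_Ioc]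
        rintro ⟨h1, h2⟩
        exact ht ⟨lt_of_le_of_lt (le_max_right _ _) h1, le_trans h2 (min_le_right _ _)⟩
      simp [hKt, Set.indicator_of_notMem ht]
  calc ∫⁻ s in Set.Icc (0:ℝ) T, (‖Teps T' ε f0 s‖₊ : ℝ≥0∞) ^ 2
      ≤ ∫⁻ s in Set.Icc (0:ℝ) T,
          ENNReal.ofReal (1/ε) * ∫⁻ t in Set.Ioc (max (s - ε) 0) (min s T'), G t :=
        lintegral_mono fun s => hpt s
    _ ≤ ∫⁻ s, ENNReal.ofReal (1/ε) * ∫⁻ t in Set.Ioc (max (s - ε) 0) (min s T'), G t :=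
        setLIntegral_le_lintegral _ _
    _ = ENNReal.ofReal (1/ε) * ∫⁻ s, ∫⁻ t in Set.Ioc (max (s - ε) 0) (min s T'), G t :=
        lintegral_const_mul' _ _ ENNReal.ofReal_ne_top
    _ = ENNReal.ofReal (1/ε) * ∫⁻ s, ∫⁻ t, K s t := by
        congr 1
        refine lintegral_congr fun s => ?_
        rw [← lintegral_indicator measurableSet_Ioc]
    _ = ENNReal.ofReal (1/ε) * ∫⁻ t, ∫⁻ s, K s t := by
        rw [lintegral_lintegral_swap hKm.aemeasurable]
    _ = ENNReal.ofReal (1/ε)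
          * ∫⁻ t, Set.indicator (Set.Ioc 0 T') (fun t => G t * ENNReal.ofReal ε) t := by
        simp_rw [hinner]
    _ = ENNReal.ofReal (1/ε) * ((∫⁻ t in Set.Ioc 0 T', G t) * ENNReal.ofReal ε) := by
        rw [lintegral_indicator measurableSet_Ioc,
          lintegral_mul_const' _ _ ENNReal.ofReal_ne_top]
    _ = (∫⁻ t in Set.Ioc 0 T', G t)
          * (ENNReal.ofReal (1/ε) * ENNReal.ofReal ε) := by ring
    _ = ∫⁻ t in Set.Ioc 0 T', G t := by
        rw [← ENNReal.ofReal_mul (by positivity), one_div, inv_mul_cancel₀ hε.ne',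
          ENNReal.ofReal_one, mul_one]
    _ ≤ ∫⁻ t, G t := setLIntegral_le_lintegral _ _

theorem Teps_tendsto_zero {H : Type*} [NormedAddCommGroup H] [InnerProductSpace ℝ H]
    [CompleteSpace H] [TopologicalSpace.SeparableSpace H]
    (T T' : ℝ) (hT : 0 < T) (hT' : 0 ≤ T') (hT'T : T' < T)
    (y : ℝ → H) (hy : MemLp y 2 (volume.restrict (Set.Icc 0 T))) :
    Filter.Tendsto (fun ε => ∫ s in Set.Icc (0 : ℝ) T, ‖Teps T' ε y s‖ ^ 2)
      (nhdsWithin 0 (Set.Ioc 0 (T - T'))) (nhds 0) := by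
  haveI : Fact ((1:ℝ≥0∞) ≤ 2) := ⟨one_le_two⟩
  have hsm := hy.aestronglyMeasurable
  set f0 : ℝ → H := (Set.Icc (0:ℝ) T).indicator (hsm.mk y) with hf0def
  have hf0m : StronglyMeasurable f0 := hsm.stronglyMeasurable_mk.indicator measurableSet_Icc
  have hae : y =ᵐ[volume.restrict (Set.Icc 0 T)] f0 := by
    filter_upwards [hsm.ae_eq_mk, ae_restrict_mem measurableSet_Icc] with t h1 h2
    rw [h1, hf0def, Set.indicator_of_mem h2]
  have hf0mem : MemLp f0 2 volume := by
    refine ⟨hf0m.aestronglyMeasurable, ?_⟩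
    rw [hf0def, eLpNorm_indicator_eq_eLpNorm_restrict measurableSet_Icc,
      eLpNorm_congr_ae hsm.ae_eq_mk.symm]
    exact hy.2
  set F : Lp H 2 volume := hf0mem.toLp f0 with hFdef
  have hFcoe : ⇑F =ᵐ[volume] f0 := hf0mem.coeFn_toLp
  set sh : ℝ → C(ℝ, ℝ) := fun ε => ⟨fun t => t + ε, by continuity⟩ with hshdef
  have hshc : Continuous sh := by
    apply ContinuousMap.continuous_of_continuous_uncurry
    exact (continuous_snd.add continuous_fst : Continuous fun p : ℝ × ℝ => p.2 + p.1)
  have hmp : ∀ ε : ℝ, MeasurePreserving (sh ε) volume volume := fun ε =>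
    measurePreserving_add_right volume ε
  set C : ℝ → Lp H 2 volume := fun ε => Lp.compMeasurePreserving (sh ε) (hmp ε) F with hCdef
  have hCcont : ContinuousAt C 0 :=
    ContinuousAt.compMeasurePreservingLp continuousAt_const hshc.continuousAt hmp (by norm_num)
  have hCε : ∀ ε : ℝ, ⇑(C ε) =ᵐ[volume] fun t => f0 (t + ε) := by
    intro ε
    have h1 := Lp.coeFn_compMeasurePreserving F (hmp ε)
    have h2 : (⇑F ∘ (sh ε)) =ᵐ[volume] (f0 ∘ (sh ε)) :=
      (hmp ε).quasiMeasurePreserving.ae_eq hFcoe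
    exact h1.trans h2
  have hC0 : ⇑(C 0) =ᵐ[volume] f0 := by
    refine (hCε 0).trans ?_
    filter_upwards with t
    simp
  have hub : ∀ ε ∈ Set.Ioc (0:ℝ) (T - T'),
      ∫ s in Set.Icc (0:ℝ) T, ‖Teps T' ε y s‖ ^ 2 ≤ dist (C ε) (C 0) ^ 2 := by
    intro ε hεmem
    obtain ⟨hε, hεle⟩ := hεmem
    have hy1 : ∀ᵐ t ∂volume, t ∈ Set.Icc (0:ℝ) T → y t = f0 t :=
      (ae_restrict_iff' measurableSet_Icc).mp hae
    have hy2 : ∀ᵐ t ∂volume, (t + ε) ∈ Set.Icc (0:ℝ) T → y (t + ε) = f0 (t + ε) :=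
      (measurePreserving_add_right volume ε).quasiMeasurePreserving.ae hy1
    have hTeq : ∀ s, Teps T' ε y s = Teps T' ε f0 s := by
      intro s
      simp only [Teps]
      congr 1
      refine setIntegral_congr_ae measurableSet_Ioc ?_
      filter_upwards [hy1, hy2] with t h1 h2 htmem
      obtain ⟨hta, htb⟩ := htmem
      have ht0 : 0 < t := lt_of_le_of_lt (le_max_right _ _) hta
      have htT' : t ≤ T' := le_trans htb (min_le_right _ _)
      rw [h1 ⟨ht0.le, by linarith⟩, h2 ⟨by linarith, by linarith⟩]
    have hdiff : (fun t => f0 (t + ε) - f0 t) =ᵐ[volume] ⇑(C ε - C 0) := by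
      filter_upwards [hCε ε, hC0, Lp.coeFn_sub (C ε) (C 0)] with t h1 h2 h3
      rw [h3]
      simp only [Pi.sub_apply, h1, h2]
    have hNfin : eLpNorm (fun t => f0 (t + ε) - f0 t) 2 volume ≠ ⊤ := by
      rw [eLpNorm_congr_ae hdiff]; exact Lp.eLpNorm_ne_top _
    have hNdist : (eLpNorm (fun t => f0 (t + ε) - f0 t) 2 volume).toReal
        = dist (C ε) (C 0) := by
      rw [eLpNorm_congr_ae hdiff, Lp.dist_def,
        eLpNorm_congr_ae (Lp.coeFn_sub (C ε) (C 0))]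
    have hG_eq : ∫⁻ t, (‖f0 (t + ε) - f0 t‖₊ : ℝ≥0∞) ^ 2
        = eLpNorm (fun t => f0 (t + ε) - f0 t) 2 volume ^ 2 := by
      rw [eLpNorm_eq_lintegral_rpow_enorm_toReal two_ne_zero ENNReal.ofNat_ne_top]
      rw [← ENNReal.rpow_natCast (_ ^ _) 2, ← ENNReal.rpow_mul]
      norm_num
      rfl
    have hTeq' : ∫ s in Set.Icc (0:ℝ) T, ‖Teps T' ε y s‖ ^ 2
        = ∫ s in Set.Icc (0:ℝ) T, ‖Teps T' ε f0 s‖ ^ 2 := by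
      simp_rw [hTeq]
    rw [hTeq']
    by_cases hInt : Integrable (fun s => ‖Teps T' ε f0 s‖ ^ 2)
        (volume.restrict (Set.Icc (0:ℝ) T))
    · rw [integral_eq_lintegral_of_nonneg_ae (Filter.Eventually.of_forall fun s => by positivity)
        hInt.1]
      have hconv : ∀ s : ℝ, ENNReal.ofReal (‖Teps T' ε f0 s‖ ^ 2)
          = (‖Teps T' ε f0 s‖₊ : ℝ≥0∞) ^ 2 := fun s => by
        rw [ENNReal.ofReal_pow (norm_nonneg _), ofReal_norm, enorm_eq_nnnorm]
      simp_rw [hconv]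
      have hle := key T T' ε hε f0 hf0m
      rw [hG_eq] at hle
      calc (∫⁻ s in Set.Icc (0:ℝ) T, (‖Teps T' ε f0 s‖₊ : ℝ≥0∞) ^ 2).toReal
          ≤ (eLpNorm (fun t => f0 (t + ε) - f0 t) 2 volume ^ 2).toReal :=
            ENNReal.toReal_mono (ENNReal.pow_ne_top hNfin) hle
        _ = dist (C ε) (C 0) ^ 2 := by rw [ENNReal.toReal_pow, hNdist]
    · rw [integral_undef hInt]
      positivity
  have htend : Filter.Tendsto (fun ε => dist (C ε) (C 0) ^ 2)
      (nhdsWithin 0 (Set.Ioc 0 (T - T'))) (nhds 0) := by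
    have h1 : Filter.Tendsto C (nhdsWithin 0 (Set.Ioc 0 (T - T'))) (nhds (C 0)) :=
      hCcont.tendsto.mono_left nhdsWithin_le_nhds
    have h2 : Filter.Tendsto (fun ε => dist (C ε) (C 0))
        (nhdsWithin 0 (Set.Ioc 0 (T - T'))) (nhds 0) := by
      simpa [dist_self] using h1.dist (tendsto_const_nhds (x := C 0))
    simpa using h2.pow 2
  refine squeeze_zero' ?_ ?_ htend
  · filter_upwards with ε
    exact integral_nonneg fun s => by positivity
  · filter_upwards [eventually_mem_nhdsWithin] with ε hε
    exact hub ε hε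
end
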